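/- In the kernel LNF, the identity cut is reducible away: for all LNF terms M, the generalized cut C(M : y.↑y) reduces in LNF to M. -/

import Mathlib

namespace Paper

mutual
/-- Terms of the simplified LJQ calculus λQ. -/
inductive QTm : Type
| up : QVal → QTm
| li : String → QVal → String → QTm → QTm
| cut : QTm → String → QTm → QTm
/-- Values of λQ. -/
inductive QVal : Type
| var : String → QVal
| lam : String → QTm → QVal
end

mutual
def QTm.fv : QTm → Finset String
| .up V => QVal.fv V
| .li x V y N => {x} ∪ QVal.fv V ∪ (QTm.fv N \ {y})
| .cut M x N => QTm.fv M ∪ (QTm.fv N \ {x})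
def QVal.fv : QVal → Finset String
| .var x => {x}
| .lam x M => QTm.fv M \ {x}
end

mutual
/-- Value substitution [V/y]- on λQ values. -/
def QVal.substV (V : QVal) (y : String) : QVal → QVal
| .var z => if z = y then V else .var z
| .lam z M => if z = y then .lam z M else .lam z (QTm.substT V y M)
/-- Value substitution [V/y]- on λQ terms, with the critical clauses on y(W,z.P). -/
def QTm.substT (V : QVal) (y : String) : QTm → QTm
| .up W => .up (QVal.substV V y W)
| .li x W z P =>
    if x = y then
      match V with
      | .var v => .li v (QVal.substV V y W) z (if z = y then P else QTm.substT V y P)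
      | .lam a M => .cut (.up (.lam a M)) y
          (.li y (QVal.substV V y W) z (if z = y then P else QTm.substT V y P))
    else .li x (QVal.substV V y W) z (if z = y then P else QTm.substT V y P)
| .cut M x N => .cut (QTm.substT V y M) x (if x = y then N else QTm.substT V y N)
end

/-- Names for the reduction rules of λQ. -/
inductive QRule | bv | sigmav | etacut | pi1 | pi2

/-- A Bv-redex of λQ. -/
def IsBvRedex : QTm → Prop := fun t =>
  ∃ x M y V z N, t = .cut (.up (.lam x M)) y (.li y V z N)
    ∧ y ∉ QVal.fv V ∧ y ∉ QTm.fv N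

mutual
/-- One-step rule-tagged reduction of λQ on terms, closed under all contexts. -/
inductive QStepT : QRule → QTm → QTm → Prop
| bv {x M y V z N} : y ∉ QVal.fv V → y ∉ QTm.fv N →
    QStepT .bv (.cut (.up (.lam x M)) y (.li y V z N)) (.cut (.cut (.up V) x M) z N)
| sigmav {V y N} : ¬ IsBvRedex (.cut (.up V) y N) →
    QStepT .sigmav (.cut (.up V) y N) (QTm.substT V y N)
| etacut {M x} : QStepT .etacut (.cut M x (.up (.var x))) M
| pi1 {z V y P x N} : QStepT .pi1 (.cut (.li z V y P) x N) (.li z V y (.cut P x N))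
| pi2 {M y P x N} : QStepT .pi2 (.cut (.cut M y P) x N) (.cut M y (.cut P x N))
| upC {r V V'} : QStepV r V V' → QStepT r (.up V) (.up V')
| liC1 {r x V V' y N} : QStepV r V V' → QStepT r (.li x V y N) (.li x V' y N)
| liC2 {r x V y N N'} : QStepT r N N' → QStepT r (.li x V y N) (.li x V y N')
| cutL {r M M' x N} : QStepT r M M' → QStepT r (.cut M x N) (.cut M' x N)
| cutR {r M x N N'} : QStepT r N N' → QStepT r (.cut M x N) (.cut M x N')
/-- One-step rule-tagged reduction of λQ on values. -/
inductive QStepV : QRule → QVal → QVal → Prop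
| lamC {r x M M'} : QStepT r M M' → QStepV r (.lam x M) (.lam x M')
end

mutual
/-- Terms of the kernel LNF of λQ (as a predicate on λQ terms: every cut is
of the form C(↑V, x.N)). -/
inductive LNFt : QTm → Prop
| up {V} : LNFv V → LNFt (.up V)
| li {x V y N} : LNFv V → LNFt N → LNFt (.li x V y N)
| cut {V x N} : LNFv V → LNFt N → LNFt (.cut (.up V) x N)
/-- Values of LNF. -/
inductive LNFv : QVal → Prop
| var {x} : LNFv (.var x)
| lam {x M} : LNFt M → LNFv (.lam x M)
end

/-- The generalized left-permuted cut C(M : x.N), defined by recursion on M. -/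
def gcut : QTm → String → QTm → QTm
| .up V, x, N => .cut (.up V) x N
| .li z V y P, x, N => .li z V y (gcut P x N)
| .cut A y P, x, N => .cut A y (gcut P x N)

/-- A π-step of λQ (a π₁- or π₂-step). -/
def PiStep (a b : QTm) : Prop := QStepT .pi1 a b ∨ QStepT .pi2 a b

mutual
/-- One-step reduction of the kernel LNF on terms, closed under all contexts. -/
inductive NStepT : QTm → QTm → Prop
| bv {x M y V z N} : y ∉ QVal.fv V → y ∉ QTm.fv N →
    NStepT (.cut (.up (.lam x M)) y (.li y V z N)) (.cut (.up V) x (gcut M z N))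
| sigmav {V y N} : ¬ IsBvRedex (.cut (.up V) y N) →
    NStepT (.cut (.up V) y N) (QTm.substT V y N)
| upC {V V'} : NStepV V V' → NStepT (.up V) (.up V')
| liC1 {x V V' y N} : NStepV V V' → NStepT (.li x V y N) (.li x V' y N)
| liC2 {x V y N N'} : NStepT N N' → NStepT (.li x V y N) (.li x V y N')
| cutL {M M' x N} : NStepT M M' → NStepT (.cut M x N) (.cut M' x N)
| cutR {M x N N'} : NStepT N N' → NStepT (.cut M x N) (.cut M x N')
/-- One-step reduction of LNF on values. -/
inductive NStepV : QVal → QVal → Prop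
| lamC {x M M'} : NStepT M M' → NStepV (.lam x M) (.lam x M')
end

theorem QTm.substT_up_var_self (V : QVal) (y : String) :
    QTm.substT V y (.up (.var y)) = .up V := by
  simp [QTm.substT, QVal.substV]

theorem not_isBvRedex_cut_up (M : QTm) (y : String) (W : QVal) :
    ¬ IsBvRedex (.cut M y (.up W)) := by
  rintro ⟨_, _, _, _, _, _, h, -, -⟩
  cases h

theorem NStepT.cut_up_var_self (V : QVal) (y : String) :
    NStepT (.cut (.up V) y (.up (.var y))) (.up V) := by
  simpa only [QTm.substT_up_var_self] using
    NStepT.sigmav (V := V) (y := y) (N := .up (.var y)) (not_isBvRedex_cut_up _ y _)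

theorem NStepT.reflTransGen_liC2 {x : String} {V : QVal} {y : String} {N N' : QTm}
    (h : Relation.ReflTransGen NStepT N N') :
    Relation.ReflTransGen NStepT (.li x V y N) (.li x V y N') :=
  Relation.ReflTransGen.lift (QTm.li x V y) (fun _ _ => NStepT.liC2) _ _ h

theorem NStepT.reflTransGen_cutR {M : QTm} {x : String} {N N' : QTm}
    (h : Relation.ReflTransGen NStepT N N') :
    Relation.ReflTransGen NStepT (.cut M x N) (.cut M x N') :=
  Relation.ReflTransGen.lift (QTm.cut M x) (fun _ _ => NStepT.cutR) _ _ h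

theorem reflTransGen_gcut_up_var (y : String) : ∀ M : QTm,
    Relation.ReflTransGen NStepT (gcut M y (.up (.var y))) M
  | .up V => .single (NStepT.cut_up_var_self V y)
  | .li _ _ _ N => NStepT.reflTransGen_liC2 (reflTransGen_gcut_up_var y N)
  | .cut _ _ N => NStepT.reflTransGen_cutR (reflTransGen_gcut_up_var y N)

/-- in LNF, the identity cut is reducible away: the generalized cut
C(M : y.↑y) reduces in LNF to M. -/
theorem stmt8 (y : String) (M : QTm) (hM : LNFt M) :
    Relation.ReflTransGen NStepT (gcut M y (.up (.var y))) M :=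
  reflTransGen_gcut_up_var y M

end Paper
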